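/- Let ρ_ABC be a positive-definite density matrix on H_A ⊗ H_B ⊗ H_C satisfying ρ_ABC = ρ_AB ρ_B^{-1} ρ_BC, with η_ABC := (1/d_B) ρ_B^{-1/2} ρ_ABC ρ_B^{-1/2} and η_AB, η_BC its marginals. Let W be the unitary from the polar decomposition ρ_AB^{1/2} ρ_B^{-1/2} = d_B^{1/2} W η_AB^{1/2}. If W η_BC W* = η_BC (identifying η_BC with I_A ⊗ η_BC acting on H_A ⊗ H_B ⊗ H_C and W with W ⊗ I_C), then ρ_ABC = ρ_AB^{1/2} ρ_B^{-1/2} ρ_BC ρ_B^{-1/2} ρ_AB^{1/2}, i.e., ρ_ABC is a quantum Markov chain. -/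

import Mathlib

open Matrix BigOperators
open scoped Kronecker ComplexOrder

noncomputable section

/-- The positive semidefinite square root of a positive semidefinite matrix
(restored verbatim from the Mathlib definition of December 2024, since removed). -/
def Matrix.PosSemidef.sqrt {n 𝕜 : Type*} [Fintype n] [DecidableEq n] [RCLike 𝕜]
    {M : Matrix n n 𝕜} (hM : M.PosSemidef) : Matrix n n 𝕜 :=
  hM.1.eigenvectorUnitary.1 * diagonal ((↑) ∘ (√·) ∘ hM.1.eigenvalues) *
    (star hM.1.eigenvectorUnitary : Matrix n n 𝕜)

set_option linter.unusedSectionVars false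

open scoped MatrixOrder in
lemma Matrix.PosSemidef.sqrt_eq_cfcSqrt {n : Type*} [Fintype n] [DecidableEq n]
    {M : Matrix n n ℂ} (hM : M.PosSemidef) : hM.sqrt = CFC.sqrt M := by
  rw [CFC.sqrt_eq_cfc, cfc_nnreal_eq_real _ M hM.nonneg, hM.1.cfc_eq]
  simp only [IsHermitian.cfc, Unitary.conjStarAlgAut_apply, Matrix.PosSemidef.sqrt]
  have hf : (fun x : ℝ => ((NNReal.sqrt x.toNNReal : NNReal) : ℝ)) = fun x => √x :=
    funext fun x => by rw [Real.sqrt]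
  rw [hf]

open scoped MatrixOrder in
lemma Matrix.PosSemidef.posSemidef_sqrt {n : Type*} [Fintype n] [DecidableEq n]
    {M : Matrix n n ℂ} (hM : M.PosSemidef) : hM.sqrt.PosSemidef := by
  rw [hM.sqrt_eq_cfcSqrt]; exact (CFC.sqrt_nonneg M).posSemidef

open scoped MatrixOrder in
lemma Matrix.PosSemidef.sqrt_mul_self {n : Type*} [Fintype n] [DecidableEq n]
    {M : Matrix n n ℂ} (hM : M.PosSemidef) : hM.sqrt * hM.sqrt = M := by
  rw [hM.sqrt_eq_cfcSqrt]; exact CFC.sqrt_mul_sqrt_self M hM.nonneg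

open scoped MatrixOrder in
lemma Matrix.PosSemidef.eq_sqrt_of_sq_eq {n : Type*} [Fintype n] [DecidableEq n]
    {N : Matrix n n ℂ} (hN : N.PosSemidef) (M : Matrix n n ℂ) (hM : M.PosSemidef)
    (h : N ^ 2 = M) : N = hM.sqrt := by
  rw [hM.sqrt_eq_cfcSqrt]; exact (CFC.sqrt_unique (by rw [← sq]; exact h) hN.nonneg).symm

namespace BSQMC

variable {A B C : Type*} [Fintype A] [Fintype B] [Fintype C]
  [DecidableEq A] [DecidableEq B] [DecidableEq C]

/-- Partial trace over the `A` system. -/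
def ptA (M : Matrix (A × B × C) (A × B × C) ℂ) : Matrix (B × C) (B × C) ℂ :=
  Matrix.of fun p q => ∑ a : A, M (a, p) (a, q)

/-- Partial trace over the `C` system. -/
def ptC (M : Matrix (A × B × C) (A × B × C) ℂ) : Matrix (A × B) (A × B) ℂ :=
  Matrix.of fun p q => ∑ c : C, M (p.1, p.2, c) (q.1, q.2, c)

/-- Partial trace over the `A` and `C` systems. -/
def ptAC (M : Matrix (A × B × C) (A × B × C) ℂ) : Matrix B B ℂ :=
  Matrix.of fun b b' => ∑ a : A, ∑ c : C, M (a, b, c) (a, b', c)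

/-- `X_B ↦ I_A ⊗ X_B ⊗ I_C`. -/
def embB (X : Matrix B B ℂ) : Matrix (A × B × C) (A × B × C) ℂ :=
  Matrix.of fun p q =>
    (if p.1 = q.1 then (1 : ℂ) else 0) * X p.2.1 q.2.1 * (if p.2.2 = q.2.2 then 1 else 0)

/-- `X_{AB} ↦ X_{AB} ⊗ I_C`. -/
def embAB (X : Matrix (A × B) (A × B) ℂ) : Matrix (A × B × C) (A × B × C) ℂ :=
  Matrix.of fun p q => X (p.1, p.2.1) (q.1, q.2.1) * (if p.2.2 = q.2.2 then (1 : ℂ) else 0)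

/-- `X_{BC} ↦ I_A ⊗ X_{BC}`. -/
def embBC (X : Matrix (B × C) (B × C) ℂ) : Matrix (A × B × C) (A × B × C) ℂ :=
  Matrix.of fun p q => (if p.1 = q.1 then (1 : ℂ) else 0) * X p.2 q.2

/-- `X_B ↦ I_A ⊗ X_B` (on the `A × B` factor). -/
def embB2 (X : Matrix B B ℂ) : Matrix (A × B) (A × B) ℂ :=
  Matrix.of fun p q => (if p.1 = q.1 then (1 : ℂ) else 0) * X p.2 q.2

/-! ### Auxiliary lemmas -/

/-- `X_B ↦ X_B ⊗ I_C` (on the `B × C` factor). -/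
def embB3 (X : Matrix B B ℂ) : Matrix (B × C) (B × C) ℂ :=
  Matrix.of fun p q => X p.1 q.1 * (if p.2 = q.2 then (1 : ℂ) else 0)

lemma embAB_mul (X Y : Matrix (A × B) (A × B) ℂ) :
    (embAB (X * Y) : Matrix (A × B × C) (A × B × C) ℂ) = embAB X * embAB Y := by
  ext ⟨a, b, c⟩ ⟨a', b', c'⟩
  simp [embAB, Matrix.mul_apply, Fintype.sum_prod_type, Finset.sum_mul, Finset.mul_sum,
    mul_ite, ite_mul, mul_zero, zero_mul]

lemma embBC_mul (X Y : Matrix (B × C) (B × C) ℂ) :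
    (embBC (X * Y) : Matrix (A × B × C) (A × B × C) ℂ) = embBC X * embBC Y := by
  ext ⟨a, b, c⟩ ⟨a', b', c'⟩
  simp [embBC, Matrix.mul_apply, Fintype.sum_prod_type, Finset.sum_mul, Finset.mul_sum,
    mul_ite, ite_mul, mul_zero, zero_mul]

lemma embB_mul (X Y : Matrix B B ℂ) :
    (embB (X * Y) : Matrix (A × B × C) (A × B × C) ℂ) = embB X * embB Y := by
  ext ⟨a, b, c⟩ ⟨a', b', c'⟩
  simp [embB, Matrix.mul_apply, Fintype.sum_prod_type, Finset.sum_mul, Finset.mul_sum,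
    mul_ite, ite_mul, mul_zero, zero_mul]

lemma embAB_one : (embAB 1 : Matrix (A × B × C) (A × B × C) ℂ) = 1 := by
  ext ⟨a, b, c⟩ ⟨a', b', c'⟩
  simp [embAB, Matrix.one_apply, Prod.ext_iff, ite_and]
  aesop

lemma embB_one : (embB 1 : Matrix (A × B × C) (A × B × C) ℂ) = 1 := by
  ext ⟨a, b, c⟩ ⟨a', b', c'⟩
  simp [embB, Matrix.one_apply, Prod.ext_iff, ite_and]
  aesop

lemma embAB_smul (z : ℂ) (X : Matrix (A × B) (A × B) ℂ) :
    (embAB (z • X) : Matrix (A × B × C) (A × B × C) ℂ) = z • embAB X := by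
  ext ⟨a, b, c⟩ ⟨a', b', c'⟩
  simp [embAB, mul_assoc]

lemma embBC_smul (z : ℂ) (X : Matrix (B × C) (B × C) ℂ) :
    (embBC (z • X) : Matrix (A × B × C) (A × B × C) ℂ) = z • embBC X := by
  ext ⟨a, b, c⟩ ⟨a', b', c'⟩
  simp [embBC, mul_left_comm]

lemma embAB_conjTranspose (X : Matrix (A × B) (A × B) ℂ) :
    (embAB Xᴴ : Matrix (A × B × C) (A × B × C) ℂ) = (embAB X)ᴴ := by
  ext ⟨a, b, c⟩ ⟨a', b', c'⟩
  simp [embAB, Matrix.conjTranspose_apply, eq_comm, mul_comm, apply_ite (starRingEnd ℂ)]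

lemma embBC_conjTranspose (X : Matrix (B × C) (B × C) ℂ) :
    (embBC Xᴴ : Matrix (A × B × C) (A × B × C) ℂ) = (embBC X)ᴴ := by
  ext ⟨a, b, c⟩ ⟨a', b', c'⟩
  simp [embBC, Matrix.conjTranspose_apply, eq_comm, mul_comm, apply_ite (starRingEnd ℂ)]

lemma embB_conjTranspose (X : Matrix B B ℂ) :
    (embB Xᴴ : Matrix (A × B × C) (A × B × C) ℂ) = (embB X)ᴴ := by
  ext ⟨a, b, c⟩ ⟨a', b', c'⟩
  simp only [embB, Matrix.conjTranspose_apply, Matrix.of_apply, apply_ite (starRingEnd ℂ),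
    map_zero, _root_.map_one, _root_.map_mul, eq_comm]
  split_ifs <;> simp

lemma embB_eq_AB (X : Matrix B B ℂ) :
    (embAB (embB2 X) : Matrix (A × B × C) (A × B × C) ℂ) = embB X := by
  ext ⟨a, b, c⟩ ⟨a', b', c'⟩
  simp [embAB, embB2, embB]

lemma embB_eq_BC (X : Matrix B B ℂ) :
    (embBC (embB3 X) : Matrix (A × B × C) (A × B × C) ℂ) = embB X := by
  ext ⟨a, b, c⟩ ⟨a', b', c'⟩
  simp [embBC, embB3, embB, mul_assoc]

lemma ptA_conjTranspose (M : Matrix (A × B × C) (A × B × C) ℂ) :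
    ptA Mᴴ = (ptA M)ᴴ := by
  ext p q
  simp [ptA, Matrix.conjTranspose_apply]

lemma ptA_smul (z : ℂ) (M : Matrix (A × B × C) (A × B × C) ℂ) :
    ptA (z • M) = z • ptA M := by
  ext p q
  simp [ptA, Finset.mul_sum]

lemma ptC_smul (z : ℂ) (M : Matrix (A × B × C) (A × B × C) ℂ) :
    ptC (z • M) = z • ptC M := by
  ext p q
  simp [ptC, Finset.mul_sum]

lemma embBC_mul_apply (X : Matrix (B × C) (B × C) ℂ) (M : Matrix (A × B × C) (A × B × C) ℂ)
    (a : A) (p : B × C) (r : A × B × C) :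
    ((embBC X : Matrix (A × B × C) (A × B × C) ℂ) * M) (a, p) r
      = ∑ u : B × C, X p u * M (a, u) r := by
  rw [Matrix.mul_apply, Fintype.sum_prod_type, Finset.sum_comm]
  simp [embBC, ite_mul, zero_mul, Finset.sum_ite_eq, mul_assoc]

lemma mul_embBC_apply (Y : Matrix (B × C) (B × C) ℂ) (M : Matrix (A × B × C) (A × B × C) ℂ)
    (a : A) (q : B × C) (r : A × B × C) :
    (M * (embBC Y : Matrix (A × B × C) (A × B × C) ℂ)) r (a, q)
      = ∑ v : B × C, M r (a, v) * Y v q := by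
  rw [Matrix.mul_apply, Fintype.sum_prod_type, Finset.sum_comm]
  simp [embBC, mul_ite, mul_zero, mul_assoc, Finset.sum_ite_eq', mul_left_comm, mul_comm]

lemma ptA_embBC_mul (X : Matrix (B × C) (B × C) ℂ) (M : Matrix (A × B × C) (A × B × C) ℂ) :
    ptA (embBC X * M) = X * ptA M := by
  ext p q
  calc ptA ((embBC X : Matrix (A × B × C) (A × B × C) ℂ) * M) p q
      = ∑ a : A, ∑ u : B × C, X p u * M (a, u) (a, q) := by
        simp only [ptA, Matrix.of_apply, embBC_mul_apply]
    _ = ∑ u : B × C, ∑ a : A, X p u * M (a, u) (a, q) := Finset.sum_comm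
    _ = (X * ptA M) p q := by
        simp [ptA, Matrix.mul_apply, Finset.mul_sum]

lemma ptA_mul_embBC (Y : Matrix (B × C) (B × C) ℂ) (M : Matrix (A × B × C) (A × B × C) ℂ) :
    ptA (M * embBC Y) = ptA M * Y := by
  ext p q
  calc ptA (M * (embBC Y : Matrix (A × B × C) (A × B × C) ℂ)) p q
      = ∑ a : A, ∑ v : B × C, M (a, p) (a, v) * Y v q := by
        simp only [ptA, Matrix.of_apply, mul_embBC_apply]
    _ = ∑ v : B × C, ∑ a : A, M (a, p) (a, v) * Y v q := Finset.sum_comm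
    _ = (ptA M * Y) p q := by
        simp [ptA, Matrix.mul_apply, Finset.sum_mul]

lemma ptA_conj (X Y : Matrix (B × C) (B × C) ℂ) (M : Matrix (A × B × C) (A × B × C) ℂ) :
    ptA (embBC X * M * embBC Y) = X * ptA M * Y := by
  rw [ptA_mul_embBC, ptA_embBC_mul]

lemma sum_prodAssoc (f : A × B × C → ℂ) :
    ∑ x : A × B × C, f x = ∑ u : A × B, ∑ γ : C, f (u.1, u.2, γ) := by
  have h0 := Fintype.sum_equiv (Equiv.prodAssoc A B C).symm f
    (fun x => f (x.1.1, x.1.2, x.2)) (fun ⟨a, b, c⟩ => rfl)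
  rw [h0, Fintype.sum_prod_type]

lemma embAB_mul_apply (X : Matrix (A × B) (A × B) ℂ) (M : Matrix (A × B × C) (A × B × C) ℂ)
    (a : A) (b : B) (c : C) (r : A × B × C) :
    ((embAB X : Matrix (A × B × C) (A × B × C) ℂ) * M) (a, b, c) r
      = ∑ u : A × B, X (a, b) u * M (u.1, u.2, c) r := by
  rw [Matrix.mul_apply, sum_prodAssoc]
  simp [embAB, mul_ite, mul_zero, ite_mul, zero_mul, mul_assoc]

lemma mul_embAB_apply (Y : Matrix (A × B) (A × B) ℂ) (M : Matrix (A × B × C) (A × B × C) ℂ)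
    (a : A) (b : B) (c : C) (r : A × B × C) :
    (M * (embAB Y : Matrix (A × B × C) (A × B × C) ℂ)) r (a, b, c)
      = ∑ u : A × B, M r (u.1, u.2, c) * Y u (a, b) := by
  rw [Matrix.mul_apply, sum_prodAssoc]
  simp [embAB, mul_ite, mul_zero, ite_mul, zero_mul, mul_assoc]

lemma ptC_embAB_mul (X : Matrix (A × B) (A × B) ℂ) (M : Matrix (A × B × C) (A × B × C) ℂ) :
    ptC (embAB X * M) = X * ptC M := by
  ext p q
  calc ptC ((embAB X : Matrix (A × B × C) (A × B × C) ℂ) * M) p q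
      = ∑ c : C, ∑ u : A × B, X (p.1, p.2) u * M (u.1, u.2, c) (q.1, q.2, c) := by
        simp only [ptC, Matrix.of_apply, embAB_mul_apply]
    _ = ∑ u : A × B, ∑ c : C, X (p.1, p.2) u * M (u.1, u.2, c) (q.1, q.2, c) :=
        Finset.sum_comm
    _ = (X * ptC M) p q := by
        simp [ptC, Matrix.mul_apply, Finset.mul_sum]

lemma ptC_mul_embAB (Y : Matrix (A × B) (A × B) ℂ) (M : Matrix (A × B × C) (A × B × C) ℂ) :
    ptC (M * embAB Y) = ptC M * Y := by
  ext p q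
  calc ptC (M * (embAB Y : Matrix (A × B × C) (A × B × C) ℂ)) p q
      = ∑ c : C, ∑ u : A × B, M (p.1, p.2, c) (u.1, u.2, c) * Y u (q.1, q.2) := by
        simp only [ptC, Matrix.of_apply, mul_embAB_apply]
    _ = ∑ u : A × B, ∑ c : C, M (p.1, p.2, c) (u.1, u.2, c) * Y u (q.1, q.2) :=
        Finset.sum_comm
    _ = (ptC M * Y) p q := by
        simp [ptC, Matrix.mul_apply, Finset.sum_mul]

lemma ptC_conj (X Y : Matrix (A × B) (A × B) ℂ) (M : Matrix (A × B × C) (A × B × C) ℂ) :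
    ptC (embAB X * M * embAB Y) = X * ptC M * Y := by
  rw [ptC_mul_embAB, ptC_embAB_mul]

lemma embAB_posSemidef {X : Matrix (A × B) (A × B) ℂ} (hX : X.PosSemidef) :
    (embAB X : Matrix (A × B × C) (A × B × C) ℂ).PosSemidef := by
  obtain ⟨Y, hY⟩ : ∃ Y : Matrix (A × B) (A × B) ℂ, X = Yᴴ * Y :=
    ⟨hX.sqrt, by rw [hX.posSemidef_sqrt.1.eq, hX.sqrt_mul_self]⟩
  subst hY
  rw [embAB_mul, embAB_conjTranspose]
  exact Matrix.posSemidef_conjTranspose_mul_self _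

lemma embAB_sqrt {X : Matrix (A × B) (A × B) ℂ} (hX : X.PosSemidef) :
    (embAB hX.sqrt : Matrix (A × B × C) (A × B × C) ℂ) = (embAB_posSemidef hX).sqrt := by
  apply Matrix.PosSemidef.eq_sqrt_of_sq_eq (embAB_posSemidef hX.posSemidef_sqrt)
  rw [pow_two, ← embAB_mul, hX.sqrt_mul_self]

lemma diag_fun_comm {n : Type*} [Fintype n] [DecidableEq n]
    (ι : ℝ → ℂ) (hι : Function.Injective ι) (M : Matrix n n ℂ) (g : n → ℝ) (f : ℝ → ℝ)
    (h : M * Matrix.diagonal (ι ∘ g) = Matrix.diagonal (ι ∘ g) * M) :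
    M * Matrix.diagonal (ι ∘ f ∘ g) = Matrix.diagonal (ι ∘ f ∘ g) * M := by
  ext i j
  have h' : M i j * ι (g j) = ι (g i) * M i j := by
    have := (Matrix.ext_iff.mpr h) i j
    simpa [Matrix.mul_diagonal, Matrix.diagonal_mul] using this
  rw [Matrix.mul_diagonal, Matrix.diagonal_mul]
  by_cases hM : M i j = 0
  · simp [hM]
  · have hgij : g j = g i := by
      apply hι
      apply mul_left_cancel₀ hM
      rw [h', mul_comm]
    simp [Function.comp, hgij, mul_comm]

lemma sqrt_comm {n : Type*} [Fintype n] [DecidableEq n] {X : Matrix n n ℂ}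
    (hX : X.PosSemidef) (N : Matrix n n ℂ) (h : X * N = N * X) :
    hX.sqrt * N = N * hX.sqrt := by
  set V : Matrix n n ℂ := ↑hX.1.eigenvectorUnitary with hVdef
  have hV1 : V * star V = 1 := Matrix.mem_unitaryGroup_iff.mp hX.1.eigenvectorUnitary.2
  have hV2 : star V * V = 1 := Matrix.mem_unitaryGroup_iff'.mp hX.1.eigenvectorUnitary.2
  set g : n → ℝ := hX.1.eigenvalues with hgdef
  set D : Matrix n n ℂ := Matrix.diagonal ((RCLike.ofReal : ℝ → ℂ) ∘ g) with hDdef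
  have hspec : X = V * D * star V := hX.1.spectral_theorem
  set M : Matrix n n ℂ := star V * N * V with hMdef
  have e1 : M * D = star V * (N * X) * V := by
    rw [hMdef, hspec]
    simp only [mul_assoc, hV2, mul_one]
  have e2 : D * M = star V * (X * N) * V := by
    rw [hMdef, hspec]
    simp only [← mul_assoc, hV2, one_mul]
  have hcomm : M * D = D * M := by rw [e1, e2, h]
  have hcomm2 : M * Matrix.diagonal ((RCLike.ofReal : ℝ → ℂ) ∘ Real.sqrt ∘ g) =
      Matrix.diagonal ((RCLike.ofReal : ℝ → ℂ) ∘ Real.sqrt ∘ g) * M := by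
    exact diag_fun_comm _ RCLike.ofReal_injective M g Real.sqrt (by rw [← hDdef]; exact hcomm)
  set E : Matrix n n ℂ := Matrix.diagonal ((RCLike.ofReal : ℝ → ℂ) ∘ Real.sqrt ∘ g) with hEdef
  have hs : hX.sqrt = V * E * star V := rfl
  have hN : N = V * M * star V := by
    rw [hMdef]
    simp only [← mul_assoc, hV1, one_mul]
    rw [mul_assoc, hV1, mul_one]
  rw [hs]
  conv_lhs => rw [hN]
  conv_rhs => rw [hN]
  calc V * E * star V * (V * M * star V)
      = V * (E * (star V * V) * M) * star V := by simp only [mul_assoc]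
    _ = V * (E * M) * star V := by rw [hV2]; simp only [mul_one]
    _ = V * (M * E) * star V := by rw [hcomm2]
    _ = V * (M * (star V * V) * E) * star V := by rw [hV2]; simp only [mul_one]
    _ = V * M * star V * (V * E * star V) := by simp only [mul_assoc]

theorem invariant_eta_bc_implies_qmc
    (ρ : Matrix (A × B × C) (A × B × C) ℂ)
    (hρ : ρ.PosDef) (htr : ρ.trace = 1)
    (hB : (ptAC ρ).PosDef) (hABpd : (ptC ρ).PosDef)
    (hrec : ρ = embAB (ptC ρ) * embB (ptAC ρ)⁻¹ * embBC (ptA ρ))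
    (η : Matrix (A × B × C) (A × B × C) ℂ)
    (hη : η = (Fintype.card B : ℂ)⁻¹ •
      (embB hB.inv.posSemidef.sqrt * ρ * embB hB.inv.posSemidef.sqrt))
    (hηAB : (ptC η).PosSemidef)
    (W : Matrix (A × B) (A × B) ℂ)
    (hW : W ∈ Matrix.unitaryGroup (A × B) ℂ)
    (hpolar : hABpd.posSemidef.sqrt * embB2 hB.inv.posSemidef.sqrt =
      ((Real.sqrt (Fintype.card B) : ℂ)) • (W * hηAB.sqrt))
    (hfix : embAB W * embBC (ptA η) * (embAB W)ᴴ = embBC (ptA η)) :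
    ρ = embAB hABpd.posSemidef.sqrt * embB hB.inv.posSemidef.sqrt * embBC (ptA ρ) *
      embB hB.inv.posSemidef.sqrt * embAB hABpd.posSemidef.sqrt := by
  -- B is nonempty
  have hBne : Nonempty B := by
    by_contra hc
    rw [not_nonempty_iff] at hc
    simp [Matrix.trace] at htr
  have hd0 : (Fintype.card B : ℂ) ≠ 0 := by
    exact_mod_cast Fintype.card_ne_zero
  set d : ℂ := (Fintype.card B : ℂ) with hd
  set cc : ℂ := ((Real.sqrt (Fintype.card B) : ℝ) : ℂ) with hcc
  have hccd : cc * cc = d := by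
    rw [hcc, hd]
    rw [← Complex.ofReal_mul, Real.mul_self_sqrt (Nat.cast_nonneg _)]
    simp
  set S : Matrix B B ℂ := hB.inv.posSemidef.sqrt with hS
  set r : Matrix (A × B) (A × B) ℂ := hABpd.posSemidef.sqrt with hr
  set s : Matrix (A × B × C) (A × B × C) ℂ := embB S with hsdef
  set a : Matrix (A × B × C) (A × B × C) ℂ := embAB r with hadef
  set R : Matrix (A × B × C) (A × B × C) ℂ := embBC (ptA ρ) with hRdef
  set w : Matrix (A × B × C) (A × B × C) ℂ := embAB W with hwdef
  set h : Matrix (A × B × C) (A × B × C) ℂ := embAB hηAB.sqrt with hhdef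
  set G : Matrix (A × B × C) (A × B × C) ℂ := embBC (ptA η) with hGdef
  set E : Matrix (A × B × C) (A × B × C) ℂ := embAB (ptC η) with hEdef
  clear_value d cc S r s a R w h G E
  -- recovery in terms of a, s, R
  have h1 : embAB (ptC ρ) = a * a := by
    rw [hadef, ← embAB_mul, hr, hABpd.posSemidef.sqrt_mul_self]
  have h2 : embB (ptAC ρ)⁻¹ = s * s := by
    rw [hsdef, ← embB_mul, hS, hB.inv.posSemidef.sqrt_mul_self]
  have hrec' : ρ = a * a * (s * s) * R := by
    rw [hrec, h1, h2]
  -- the embedded polar decomposition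
  have hpol : a * s = cc • (w * h) := by
    rw [hsdef, ← embB_eq_AB, hadef, ← embAB_mul, hpolar, embAB_smul, embAB_mul,
      ← hwdef, ← hhdef]
  -- s * R * s = d • G
  have hptAη : ptA η = d⁻¹ • (embB3 S * ptA ρ * embB3 S) := by
    rw [hη, ptA_smul]
    congr 1
    rw [hsdef, ← embB_eq_BC, ptA_conj]
  have hG : s * R * s = d • G := by
    rw [hGdef, hptAη, embBC_smul, embBC_mul, embBC_mul, embB_eq_BC, smul_smul,
      mul_inv_cancel₀ hd0, one_smul, hsdef, hRdef]
  -- E in terms of s, a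
  have hptCη : ptC η = d⁻¹ • (embB2 S * ptC ρ * embB2 S) := by
    rw [hη, ptC_smul]
    congr 1
    rw [hsdef, ← embB_eq_AB, ptC_conj]
  have hE : s * (a * a) * s = d • E := by
    rw [hEdef, hptCη, embAB_smul, embAB_mul, embAB_mul, embB_eq_AB, smul_smul,
      mul_inv_cancel₀ hd0, one_smul, hsdef, ← h1]
  -- η = d • (E * G)
  have hη_big : η = d • (E * G) := by
    rw [hη, hrec']
    calc d⁻¹ • (s * (a * a * (s * s) * R) * s)
        = d⁻¹ • ((s * (a * a) * s) * (s * R * s)) := by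
          congr 1
          simp only [mul_assoc]
      _ = d⁻¹ • ((d • E) * (d • G)) := by rw [hG, hE]
      _ = d • (E * G) := by
          rw [smul_mul_assoc, mul_smul_comm, smul_smul, smul_smul]
          congr 1
          field_simp
  -- hermiticity facts
  have hs_herm : sᴴ = s := by
    rw [hsdef, ← embB_conjTranspose, hS, hB.inv.posSemidef.posSemidef_sqrt.1]
  have hη_herm : ηᴴ = η := by
    rw [hη]
    rw [Matrix.conjTranspose_smul, Matrix.conjTranspose_mul, Matrix.conjTranspose_mul]
    rw [hs_herm, hρ.isHermitian.eq, ← mul_assoc]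
    congr 1
    simp [hd]
  have hG_herm : Gᴴ = G := by
    rw [hGdef, ← embBC_conjTranspose, ← ptA_conjTranspose, hη_herm]
  have hE_herm : Eᴴ = E := by
    rw [hEdef, ← embAB_conjTranspose, hηAB.1.eq]
  -- E and G commute
  have hEG : E * G = G * E := by
    have h3 : d • (E * G) = d • (G * E) := by
      conv_lhs => rw [← hη_big, ← hη_herm, hη_big]
      rw [Matrix.conjTranspose_smul, Matrix.conjTranspose_mul, hE_herm, hG_herm]
      congr 1
      simp [hd]
    exact smul_right_injective _ hd0 h3
  -- hence h commutes with G
  have hhG : h * G = G * h := by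
    have e : h = (embAB_posSemidef hηAB).sqrt := by rw [hhdef, embAB_sqrt]
    have hEG' : embAB (ptC η) * G = G * embAB (ptC η) := by rw [← hEdef]; exact hEG
    rw [e]
    exact sqrt_comm (embAB_posSemidef hηAB) G hEG'
  -- w commutes with G
  have hwG : w * G = G * w := by
    have hw1 : wᴴ * w = 1 := by
      rw [hwdef, ← embAB_conjTranspose, ← embAB_mul]
      have : Wᴴ * W = 1 := by
        have := (Matrix.mem_unitaryGroup_iff'.mp hW)
        rwa [Matrix.star_eq_conjTranspose] at this
      rw [this, embAB_one]
    calc w * G = w * G * (wᴴ * w) := by rw [hw1, mul_one]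
      _ = (w * G * wᴴ) * w := by simp only [mul_assoc]
      _ = G * w := by rw [hfix]
  -- (a*s) commutes with G
  have hASG : (a * s) * G = G * (a * s) := by
    rw [hpol, smul_mul_assoc, mul_smul_comm]
    congr 1
    calc w * h * G = w * (h * G) := by rw [mul_assoc]
      _ = w * (G * h) := by rw [hhG]
      _ = (w * G) * h := by rw [mul_assoc]
      _ = (G * w) * h := by rw [hwG]
      _ = G * (w * h) := by rw [mul_assoc]
  -- s has a right inverse
  have hdetS : IsUnit S.det := by
    have hdet1 : IsUnit ((ptAC ρ)⁻¹).det := (Matrix.isUnit_iff_isUnit_det _).mp hB.inv.isUnit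
    have h5 : S.det * S.det = ((ptAC ρ)⁻¹).det := by
      rw [← Matrix.det_mul, hS, hB.inv.posSemidef.sqrt_mul_self]
    rw [← h5] at hdet1
    exact isUnit_of_mul_isUnit_left hdet1
  have hsT : s * embB S⁻¹ = 1 := by
    rw [hsdef, ← embB_mul, Matrix.mul_nonsing_inv _ hdetS, embB_one]
  -- final computation
  have key : ρ * s = (a * s * R * s * a) * s := by
    calc ρ * s = a * a * (s * s) * R * s := by rw [hrec']
      _ = a * ((a * s) * (s * R * s)) := by simp only [mul_assoc]
      _ = a * ((a * s) * (d • G)) := by rw [hG]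
      _ = a * ((d • G) * (a * s)) := by
          rw [mul_smul_comm, hASG, smul_mul_assoc]
      _ = a * ((s * R * s) * (a * s)) := by rw [hG]
      _ = (a * s * R * s * a) * s := by simp only [mul_assoc]
  calc ρ = ρ * (s * embB S⁻¹) := by rw [hsT, mul_one]
    _ = (ρ * s) * embB S⁻¹ := by rw [mul_assoc]
    _ = ((a * s * R * s * a) * s) * embB S⁻¹ := by rw [key]
    _ = (a * s * R * s * a) * (s * embB S⁻¹) := by rw [mul_assoc]
    _ = a * s * R * s * a := by rw [hsT, mul_one]
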